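/- arXiv:1205.2879 — 2 statements merged into one kernel-verified Lean document; each statement's English description precedes it below -/
import Mathlib

section
/- Let F : Ordinal → Ordinal be any function, let α be an ordinal with 0 < α < ε(Ω), and let ξ be any ordinal. Then the set of ordinals γ such that ω^γ = γ, K_Ω α ∪ {ξ} < γ, and for every η < γ and every β < α with K_Ω β < γ one has F^β(η) < γ, is nonempty; consequently γ₀ := F^α(ξ) itself satisfies ω^{γ₀} = γ₀, K_Ω α ∪ {ξ} < γ₀, and for every η < γ₀ and every β < α with K_Ω β < γ₀, F^β(η) < γ₀. -/
open Ordinal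

/-- The least ordinal `λ` with `Ω ^ λ = λ`. -/
noncomputable def epsOmega (Ω : Ordinal) : Ordinal := sInf {x : Ordinal | Ω ^ x = x}

/-- The set `K_Ω α` of coefficients of `α`, defined by recursion on `α` via the
base-`Ω` Cantor normal form: `K_Ω α = {β₁,…,β_l} ∪ K_Ω α₁ ∪ ⋯ ∪ K_Ω α_l`. -/
noncomputable def KOmega (Ω : Ordinal) : Ordinal → Set Ordinal :=
  WellFounded.fix Ordinal.lt_wf fun α IH =>
    {β | ∃ p ∈ Ordinal.CNF Ω α, p.2 = β} ∪
    {β | ∃ p ∈ Ordinal.CNF Ω α, ∃ h : p.1 < α, β ∈ IH p.1 h}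

/-- The hierarchy `F^α`: `F^0 ξ = F ξ`, and for `α > 0`, `F^α ξ` is the least `γ` with
`ω^γ = γ`, `K_Ω α ∪ {ξ} < γ`, and `F^β η < γ` for all `η < γ` and `β < α` with `K_Ω β < γ`. -/
noncomputable def Hier (Ω : Ordinal) (F : Ordinal → Ordinal) : Ordinal → Ordinal → Ordinal :=
  WellFounded.fix Ordinal.lt_wf fun α IH =>
    if _ : α = 0 then F
    else fun ξ => sInf {γ : Ordinal | omega0 ^ γ = γ ∧ (∀ x ∈ KOmega Ω α, x < γ) ∧ ξ < γ ∧
      ∀ η < γ, ∀ β, ∀ hβ : β < α, (∀ x ∈ KOmega Ω β, x < γ) → IH β hβ η < γ}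

/-! Closing `max Ω ξ` under the small family of functions `F^β` (`β < α`) together with
`η ↦ ω ^ succ η` yields an ε-number above `Ω` and `ξ` that is closed under every `F^β`. All coefficients lie
below `Ω`, so this ordinal belongs to the set defining `F^α ξ`, whose infimum is then a member. -/

universe u

open Order Set

namespace Ordinal

theorem exists_gt_forall_apply_lt {ι : Type*} [Small.{u} ι] (f : ι → Ordinal.{u} → Ordinal.{u})
    (a : Ordinal.{u}) : ∃ γ, a < γ ∧ ∀ i, ∀ η < γ, f i η < γ := by
  -- Iterating the monotone majorants `x ↦ sup_{η < x} succ (f i η)` gives a closure point.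
  let g : ι → Ordinal.{u} → Ordinal.{u} := fun i x => ⨆ η : Iio x, succ (f i η)
  refine ⟨nfpFamily g (succ a), (lt_succ a).trans_le (le_nfpFamily g _), fun i η hη => ?_⟩
  obtain ⟨l, hl⟩ := lt_nfpFamily_iff.1 hη
  calc f i η < succ (f i η) := lt_succ _
    _ ≤ List.foldr g (succ a) (i :: l) := Ordinal.le_iSup (fun η : Iio _ => succ (f i η)) ⟨η, hl⟩
    _ ≤ nfpFamily g (succ a) := foldr_le_nfpFamily g _ _

theorem omega0_opow_eq_self_of_forall_lt {γ : Ordinal} (hγ : γ ≠ 0)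
    (h : ∀ η < γ, ω ^ succ η < γ) : ω ^ γ = γ := by
  have hlim : IsSuccLimit γ := isSuccLimit_iff.2 ⟨hγ, isSuccPrelimit_iff_succ_lt.2
    fun η hη => (right_le_opow _ one_lt_omega0).trans_lt (h η hη)⟩
  refine le_antisymm (((isNormal_opow one_lt_omega0).le_iff_forall_le hlim).2 fun η hη => ?_)
    (right_le_opow γ one_lt_omega0)
  exact ((opow_lt_opow_iff_right one_lt_omega0).2 (lt_succ η)).le.trans (h η hη).le

theorem exists_omega0_opow_eq_self_forall_apply_lt {ι : Type*} [Small.{u} ι]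
    (f : ι → Ordinal.{u} → Ordinal.{u}) (a : Ordinal.{u}) :
    ∃ γ, a < γ ∧ ω ^ γ = γ ∧ ∀ i, ∀ η < γ, f i η < γ := by
  obtain ⟨γ, haγ, hγ⟩ :=
    exists_gt_forall_apply_lt (Sum.elim (fun (_ : Unit) η => ω ^ succ η) f) a
  exact ⟨γ, haγ, omega0_opow_eq_self_of_forall_lt (zero_le.trans_lt haγ).ne' (hγ (.inl ())),
    fun i => hγ (.inr i)⟩

end Ordinal

lemma KOmega_eq (Ω α : Ordinal) : KOmega Ω α =
    {β | ∃ p ∈ CNF Ω α, p.2 = β} ∪ {β | ∃ p ∈ CNF Ω α, ∃ _ : p.1 < α, β ∈ KOmega Ω p.1} := by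
  unfold KOmega
  rw [WellFounded.fix_eq]

lemma lt_of_mem_KOmega {Ω : Ordinal} (hΩ : 1 < Ω) (α : Ordinal) : ∀ x ∈ KOmega Ω α, x < Ω := by
  induction α using WellFoundedLT.induction with
  | _ α IH =>
    rw [KOmega_eq]
    rintro x (⟨p, hp, rfl⟩ | ⟨p, -, hpα, hx⟩)
    · exact CNF.snd_lt hΩ hp
    · exact IH p.1 hpα x hx

lemma Hier_eq_sInf (Ω : Ordinal) (F : Ordinal → Ordinal) {α : Ordinal} (hα : α ≠ 0) (ξ : Ordinal) :
    Hier Ω F α ξ = sInf {γ : Ordinal | ω ^ γ = γ ∧ (∀ x ∈ KOmega Ω α, x < γ) ∧ ξ < γ ∧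
      ∀ η < γ, ∀ β < α, (∀ x ∈ KOmega Ω β, x < γ) → Hier Ω F β η < γ} := by
  unfold Hier
  rw [WellFounded.fix_eq, dif_neg hα]

theorem stmt0_general (Ω : Ordinal) (hΩ : 1 < Ω) (F : Ordinal → Ordinal) (α : Ordinal)
    (hα0 : 0 < α) (ξ : Ordinal) :
    {γ : Ordinal | omega0 ^ γ = γ ∧ (∀ x ∈ KOmega Ω α, x < γ) ∧ ξ < γ ∧
        ∀ η < γ, ∀ β < α, (∀ x ∈ KOmega Ω β, x < γ) → Hier Ω F β η < γ}.Nonempty ∧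
    (omega0 ^ Hier Ω F α ξ = Hier Ω F α ξ ∧
      (∀ x ∈ KOmega Ω α, x < Hier Ω F α ξ) ∧ ξ < Hier Ω F α ξ ∧
      ∀ η < Hier Ω F α ξ, ∀ β < α, (∀ x ∈ KOmega Ω β, x < Hier Ω F α ξ) →
        Hier Ω F β η < Hier Ω F α ξ) := by
  have hne : {γ : Ordinal | omega0 ^ γ = γ ∧ (∀ x ∈ KOmega Ω α, x < γ) ∧ ξ < γ ∧
      ∀ η < γ, ∀ β < α, (∀ x ∈ KOmega Ω β, x < γ) → Hier Ω F β η < γ}.Nonempty := by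
    obtain ⟨γ, hγ, hωγ, hclosed⟩ :=
      exists_omega0_opow_eq_self_forall_apply_lt (fun β : Iio α => Hier Ω F β) (max Ω ξ)
    exact ⟨γ, hωγ, fun x hx => (lt_of_mem_KOmega hΩ α x hx).trans ((le_max_left Ω ξ).trans_lt hγ),
      (le_max_right Ω ξ).trans_lt hγ, fun η hη β hβ _ => hclosed ⟨β, hβ⟩ η hη⟩
  refine ⟨hne, ?_⟩
  rw [Hier_eq_sInf Ω F hα0.ne' ξ]
  exact csInf_mem hne

/-- For any F, 0 < α < ε(Ω) and any ξ, the set defining F^α(ξ) is nonempty, and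
consequently γ₀ := F^α(ξ) itself satisfies the defining closure properties. -/
theorem stmt0 (Ω : Ordinal) (hΩ : 1 < Ω) (F : Ordinal → Ordinal) (α : Ordinal)
    (hα0 : 0 < α) (hα : α < epsOmega Ω) (ξ : Ordinal) :
    {γ : Ordinal | omega0 ^ γ = γ ∧ (∀ x ∈ KOmega Ω α, x < γ) ∧ ξ < γ ∧
        ∀ η < γ, ∀ β < α, (∀ x ∈ KOmega Ω β, x < γ) → Hier Ω F β η < γ}.Nonempty ∧
    (omega0 ^ Hier Ω F α ξ = Hier Ω F α ξ ∧
      (∀ x ∈ KOmega Ω α, x < Hier Ω F α ξ) ∧ ξ < Hier Ω F α ξ ∧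
      ∀ η < Hier Ω F α ξ, ∀ β < α, (∀ x ∈ KOmega Ω β, x < Hier Ω F α ξ) →
        Hier Ω F β η < Hier Ω F α ξ) :=
  stmt0_general Ω hΩ F α hα0 ξ
end

section
/- Let F : Ordinal → Ordinal be any function with F(ζ) < Ω for all ζ < Ω, let α be an ordinal with 0 < α < ε(Ω), and let η, ξ < Ω. If η < F^α(ξ), then F^α(η) ≤ F^α(ξ). -/
open Ordinal

theorem csInf_and_lt_le_of_lt_csInf (P : Ordinal → Prop) {a b : Ordinal}
    (h : a < sInf {x | P x ∧ b < x}) : sInf {x | P x ∧ a < x} ≤ sInf {x | P x ∧ b < x} := by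
  have hne : {x | P x ∧ b < x}.Nonempty := by
    by_contra hempty
    rw [Set.not_nonempty_iff_eq_empty.mp hempty, Ordinal.sInf_empty] at h
    exact zero_le.not_gt h
  obtain ⟨hP, -⟩ := csInf_mem hne
  exact csInf_le (OrderBot.bddBelow _) ⟨hP, h⟩

def IsHierClosed (Ω : Ordinal) (F : Ordinal → Ordinal) (α γ : Ordinal) : Prop :=
  ω ^ γ = γ ∧ (∀ x ∈ KOmega Ω α, x < γ) ∧
    ∀ η < γ, ∀ β < α, (∀ x ∈ KOmega Ω β, x < γ) → Hier Ω F β η < γ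

theorem Hier_of_ne_zero (Ω : Ordinal) (F : Ordinal → Ordinal) {α : Ordinal} (hα : α ≠ 0)
    (ξ : Ordinal) : Hier Ω F α ξ = sInf {γ | IsHierClosed Ω F α γ ∧ ξ < γ} := by
  rw [Hier, WellFounded.fix_eq, dif_neg hα, ← Hier]
  congr 1
  ext γ
  simp only [IsHierClosed, Set.mem_ofPred_eq]
  tauto

theorem stmt2_general (Ω : Ordinal) (F : Ordinal → Ordinal)
    (α : Ordinal) (hα0 : 0 < α)
    (η ξ : Ordinal)
    (h : η < Hier Ω F α ξ) :
    Hier Ω F α η ≤ Hier Ω F α ξ := by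
  simp only [Hier_of_ne_zero Ω F hα0.ne'] at h ⊢
  exact csInf_and_lt_le_of_lt_csInf _ h

/-- If F maps Ω into Ω, 0 < α < ε(Ω), η, ξ < Ω and η < F^α(ξ), then F^α(η) ≤ F^α(ξ). -/
theorem stmt2 (Ω : Ordinal) (hΩ : 1 < Ω) (F : Ordinal → Ordinal)
    (hF : ∀ ζ < Ω, F ζ < Ω) (α : Ordinal) (hα0 : 0 < α) (hα : α < epsOmega Ω)
    (η ξ : Ordinal) (hη : η < Ω) (hξ : ξ < Ω)
    (h : η < Hier Ω F α ξ) :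
    Hier Ω F α η ≤ Hier Ω F α ξ :=
  stmt2_general Ω F α hα0 η ξ h
end
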